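/- limsup_{m→∞} (1/m) log (∑_{k=0}^m C(m,k) |2^{m−k} − 3^k|) = log 4. In fact the limit exists and equals log 4. -/

import Mathlib

/-!
Since `|a - b|` lies between `b - a` and `a + b`, the binomial theorem squeezes the sum between
`4 ^ m - 3 ^ m ≥ 4 ^ m / 4` and `3 ^ m + 4 ^ m ≤ 2 * 4 ^ m`. Constant factors disappear after
taking the logarithm and dividing by `m`.
-/

open Filter Real Finset Topology

section Binomial

variable {R : Type*} [CommSemiring R]

lemma sum_range_choose_mul_pow (x : R) (m : ℕ) :
    ∑ k ∈ range (m + 1), (m.choose k : R) * x ^ k = (x + 1) ^ m := by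
  rw [add_pow]
  exact sum_congr rfl fun k _ => by rw [one_pow, mul_one, mul_comm]

lemma sum_range_choose_mul_pow_sub (x : R) (m : ℕ) :
    ∑ k ∈ range (m + 1), (m.choose k : R) * x ^ (m - k) = (1 + x) ^ m := by
  rw [add_pow]
  exact sum_congr rfl fun k _ => by rw [one_pow, one_mul, mul_comm]

end Binomial

lemma sum_range_choose_mul_three_pow (m : ℕ) :
    ∑ k ∈ range (m + 1), (m.choose k : ℝ) * 3 ^ k = 4 ^ m := by
  rw [sum_range_choose_mul_pow]
  norm_num

lemma sum_range_choose_mul_two_pow_sub (m : ℕ) :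
    ∑ k ∈ range (m + 1), (m.choose k : ℝ) * 2 ^ (m - k) = 3 ^ m := by
  rw [sum_range_choose_mul_pow_sub]
  norm_num

lemma tendsto_log_div_of_const_mul_pow_bounds {u : ℕ → ℝ} {b c C : ℝ} (hb : 0 < b) (hc : 0 < c)
    (hlo : ∀ᶠ m in atTop, c * b ^ m ≤ u m) (hhi : ∀ᶠ m in atTop, u m ≤ C * b ^ m) :
    Tendsto (fun m : ℕ => log (u m) / m) atTop (𝓝 (log b)) := by
  have hC : 0 < C := by
    obtain ⟨m, hlo, hhi⟩ := (hlo.and hhi).exists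
    exact hc.trans_le (le_of_mul_le_mul_right (hlo.trans hhi) (by positivity))
  have log_const_mul_pow {a : ℝ} (ha : 0 < a) :
      Tendsto (fun m : ℕ => log (a * b ^ m) / m) atTop (𝓝 (log b)) := by
    have : Tendsto (fun m : ℕ => log a / m + log b) atTop (𝓝 (log b)) := by
      simpa using (tendsto_const_div_atTop_nhds_zero_nat (log a)).add_const (log b)
    refine this.congr' ?_
    filter_upwards [eventually_ne_atTop 0] with m hm
    rw [log_mul ha.ne' (by positivity), log_pow, add_div, mul_div_cancel_left₀ _ (by simpa)]
  refine tendsto_of_tendsto_of_tendsto_of_le_of_le' (log_const_mul_pow hc) (log_const_mul_pow hC)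
    ?_ ?_
  · filter_upwards [hlo] with m hm
    gcongr
  · filter_upwards [hlo, hhi] with m hlo hhi
    have : 0 < u m := lt_of_lt_of_le (by positivity) hlo
    gcongr

/-- The number of loops of length `m` in the topological graph of Example 4.3. -/
noncomputable def loopCount (m : ℕ) : ℝ :=
  ∑ k ∈ range (m + 1), (m.choose k : ℝ) * |(2 : ℝ) ^ (m - k) - 3 ^ k|

lemma four_pow_sub_three_pow_le_loopCount (m : ℕ) : (4 : ℝ) ^ m - 3 ^ m ≤ loopCount m := by
  rw [← sum_range_choose_mul_three_pow, ← sum_range_choose_mul_two_pow_sub, ← sum_sub_distrib,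
    loopCount]
  gcongr with k
  rw [← mul_sub]
  gcongr
  exact neg_sub (2 ^ (m - k) : ℝ) (3 ^ k) ▸ neg_le_abs _

lemma loopCount_le (m : ℕ) : loopCount m ≤ 2 * 4 ^ m := by
  calc loopCount m ≤ ∑ k ∈ range (m + 1), (m.choose k : ℝ) * (2 ^ (m - k) + 3 ^ k) := by
        unfold loopCount
        gcongr with k
        exact (abs_sub _ _).trans_eq (by norm_num [abs_pow])
    _ = 3 ^ m + 4 ^ m := by
        simp only [mul_add, sum_add_distrib, sum_range_choose_mul_two_pow_sub,
          sum_range_choose_mul_three_pow]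
    _ ≤ 2 * 4 ^ m := by
        linarith [pow_le_pow_left₀ (by norm_num : (0 : ℝ) ≤ 3) (by norm_num : (3 : ℝ) ≤ 4) m]

lemma four_pow_div_four_le_loopCount {m : ℕ} (hm : m ≠ 0) : (4 : ℝ) ^ m / 4 ≤ loopCount m := by
  have h3 : (3 : ℝ) ^ m ≤ 3 * 4 ^ m / 4 := by
    obtain ⟨n, rfl⟩ := Nat.exists_eq_succ_of_ne_zero hm
    rw [pow_succ', pow_succ', mul_div_assoc, mul_div_cancel_left₀ _ (by norm_num)]
    gcongr
    norm_num
  linarith [four_pow_sub_three_pow_le_loopCount m]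

/-- `limsup_{m→∞} (1/m) log (∑_{k=0}^m C(m,k) |2^(m−k) − 3^k|) = log 4`; in fact the limit
exists and equals `log 4`. -/
theorem stmt8 :
    Filter.Tendsto (fun m : ℕ =>
        Real.log (∑ k ∈ Finset.range (m + 1),
          (m.choose k : ℝ) * |(2 : ℝ) ^ (m - k) - 3 ^ k|) / m)
      Filter.atTop (nhds (Real.log 4)) ∧
    Filter.atTop.limsup (fun m : ℕ =>
        Real.log (∑ k ∈ Finset.range (m + 1),
          (m.choose k : ℝ) * |(2 : ℝ) ^ (m - k) - 3 ^ k|) / m) = Real.log 4 := by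
  have hlo : ∀ᶠ m in atTop, (1 / 4 : ℝ) * 4 ^ m ≤ loopCount m := by
    filter_upwards [eventually_ne_atTop 0] with m hm
    linarith [four_pow_div_four_le_loopCount hm]
  have htend : Tendsto (fun m : ℕ => log (loopCount m) / m) atTop (𝓝 (log 4)) :=
    tendsto_log_div_of_const_mul_pow_bounds (by norm_num) (by norm_num) hlo
      (Eventually.of_forall loopCount_le)
  exact ⟨htend, htend.limsup_eq⟩
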